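/- Let β > 0, let K ⊆ V be the union of all minimal strongly connected components C with ρ(A_C) = e^β, let S := {u ∈ V : u ⟶* w for some w ∈ K}, and let D := S \ K. Suppose h⁰ : K → ℝ has nonnegative entries and satisfies A_K·h⁰ = e^β·h⁰. Then the matrix e^β·I − A_D is invertible, and the vector h : V → ℝ defined by h|_K = h⁰, h|_D = (e^β·I − A_D)⁻¹·A_{D,K}·h⁰ (where A_{D,K} is the D×K block of A), and h = 0 on V \ S, has nonnegative entries and satisfies A·h = e^β·h. -/

import Mathlib

/-!
Every strongly connected component `C(u)` with `u ∈ D` has `ρ(A_{C(u)}) < e^β`: it reaches a minimal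
component of spectral radius `e^β` without being one. If `A_D z = μ z` with `z ≠ 0`, then `|z|`,
extended by zero, satisfies `|μ| |z| ≤ A |z|`; restricted to a component that reaches no other
component of its support it still does, and Gelfand's formula bounds `|μ|` by the spectral radius of
that component. So every eigenvalue of `A_D` has modulus `< e^β`, and the Neumann series
`Σ e^{-β(k+1)} A_D^k` converges to a nonnegative inverse of `e^β I - A_D`. As no edge leads from `K`
into `D`, nor into `S` from outside `S`, the identity `A h = e^β h` can be checked block by block.
-/

open Filter Topology ENNReal

noncomputable section

/-- Every subset of a finite type is a `Fintype` (classically). -/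
noncomputable def setFintypeAux {V : Type*} [Fintype V] (S : Set V) : Fintype S :=
  S.toFinite.fintype

attribute [local instance] setFintypeAux

variable {V : Type*} [Fintype V] [DecidableEq V]

/-- `v ⟶* w` : some power of `A` has a positive `(v,w)` entry. -/
def Reaches (A : Matrix V V ℝ) (v w : V) : Prop := ∃ k : ℕ, 0 < (A ^ k) v w

/-- The spectral radius of a real matrix: the largest absolute value of a complex
eigenvalue. -/
def specRad (A : Matrix V V ℝ) : ℝ :=
  sSup {r : ℝ | ∃ μ ∈ spectrum ℂ (A.map fun t : ℝ => (t : ℂ)), r = ‖μ‖}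

/-- The `S × S` submatrix of `A`. -/
def subMat (A : Matrix V V ℝ) (S : Set V) : Matrix S S ℝ :=
  A.submatrix Subtype.val Subtype.val

/-- `ρ(A_S)`. -/
def specRadSub (A : Matrix V V ℝ) (S : Set V) : ℝ := specRad (subMat A S)

/-- The strongly connected component of `v`. -/
def sccOf (A : Matrix V V ℝ) (v : V) : Set V := {u | Reaches A v u ∧ Reaches A u v}

/-- `C` is a strongly connected component. -/
def IsSCC (A : Matrix V V ℝ) (C : Set V) : Prop := ∃ v : V, C = sccOf A v

/-- `C` is a minimal strongly connected component: every other component `C'` that reaches `C`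
has strictly smaller spectral radius. -/
def IsMinSCC (A : Matrix V V ℝ) (C : Set V) : Prop :=
  IsSCC A C ∧ ∀ C' : Set V, IsSCC A C' → C' ≠ C →
    (∃ v' ∈ C', ∃ u ∈ C, Reaches A v' u) → specRadSub A C' < specRadSub A C

/-- `Z_{w,v}(x) := Σ_{k=0}^∞ x^k (A^k)_{w,v} ∈ [0,∞]`. -/
def Zfun (A : Matrix V V ℝ) (w v : V) (x : ℝ) : ℝ≥0∞ :=
  ∑' k : ℕ, ENNReal.ofReal (x ^ k * (A ^ k) w v)

/-- `Z_v(x) := Σ_{w ∈ V} Z_{w,v}(x)`. -/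
def Zvert (A : Matrix V V ℝ) (v : V) (x : ℝ) : ℝ≥0∞ := ∑ w : V, Zfun A w v x

open NNReal Matrix

section SpectralRadius

variable {𝒜 : Type*} [NormedRing 𝒜] [NormedAlgebra ℂ 𝒜] [CompleteSpace 𝒜]

theorem le_spectralRadius_of_forall_pow_le (a : 𝒜) {c : ℝ≥0} (h : ∀ n : ℕ, c ^ n ≤ ‖a ^ n‖₊) :
    (c : ℝ≥0∞) ≤ spectralRadius ℂ a := by
  refine ge_of_tendsto (spectrum.pow_nnnorm_pow_one_div_tendsto_nhds_spectralRadius a) ?_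
  filter_upwards [eventually_gt_atTop 0] with n hn
  rw [one_div, ENNReal.le_rpow_inv_iff (by positivity), ENNReal.rpow_natCast]
  exact_mod_cast h n

theorem summable_norm_pow_div_of_spectralRadius_lt (a : 𝒜) {r : ℝ≥0}
    (h : spectralRadius ℂ a < r) : Summable fun n : ℕ => ‖a ^ n‖ / r ^ n := by
  obtain ⟨c, hac, hcr⟩ := ENNReal.lt_iff_exists_nnreal_btwn.1 h
  have hcr : c < r := by exact_mod_cast hcr
  have hr : (0 : ℝ) < r := c.coe_nonneg.trans_lt hcr
  refine Summable.of_norm_bounded_eventually_nat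
    (summable_geometric_of_lt_one (div_nonneg c.coe_nonneg hr.le) ((div_lt_one hr).2 hcr)) ?_
  filter_upwards [eventually_gt_atTop 0,
    (spectrum.pow_nnnorm_pow_one_div_tendsto_nhds_spectralRadius a).eventually_lt_const hac]
    with n hn0 hn
  rw [one_div, ENNReal.rpow_inv_lt_iff (by positivity), ENNReal.rpow_natCast] at hn
  have hn : ‖a ^ n‖ ≤ (c : ℝ) ^ n := by exact_mod_cast hn.le
  rw [Real.norm_of_nonneg (by positivity), div_pow]
  exact div_le_div_of_nonneg_right hn (by positivity)

theorem spectralRadius_lt_of_forall_norm_lt (a : 𝒜) {r : ℝ≥0} (hr : 0 < r)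
    (h : ∀ μ ∈ spectrum ℂ a, ‖μ‖₊ < r) : spectralRadius ℂ a < r := by
  rcases (spectrum ℂ a).eq_empty_or_nonempty with hσ | hσ
  · simpa [spectralRadius, hσ] using hr
  · exact spectrum.spectralRadius_lt_of_forall_lt_of_nonempty hσ h

end SpectralRadius

section NonnegMatrix

variable {m n : Type*} [Fintype n]

theorem Matrix.mulVec_mono_of_nonneg {M : Matrix m n ℝ} (hM : ∀ i j, 0 ≤ M i j) {v w : n → ℝ}
    (hvw : v ≤ w) : M *ᵥ v ≤ M *ᵥ w :=
  fun i => Finset.sum_le_sum fun j _ => mul_le_mul_of_nonneg_left (hvw j) (hM i j)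

theorem Matrix.mulVec_nonneg_of_nonneg {M : Matrix m n ℝ} (hM : ∀ i j, 0 ≤ M i j)
    {v : n → ℝ} (hv : 0 ≤ v) : 0 ≤ M *ᵥ v :=
  fun i => Finset.sum_nonneg fun j _ => mul_nonneg (hM i j) (hv j)

theorem Matrix.norm_map_ofReal_mulVec_le {M : Matrix m n ℝ} (hM : ∀ i j, 0 ≤ M i j)
    (z : n → ℂ) (i : m) :
    ‖(M.map ((↑) : ℝ → ℂ) *ᵥ z) i‖ ≤ (M *ᵥ fun j => ‖z j‖) i :=
  (norm_sum_le _ _).trans_eq <| Finset.sum_congr rfl fun j _ => by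
    simp [abs_of_nonneg (hM i j)]

variable [DecidableEq n]

theorem Matrix.exists_mulVec_eq_smul_of_mem_spectrum {K : Type*} [Field K] {M : Matrix n n K}
    {μ : K} (hμ : μ ∈ spectrum K M) : ∃ z ≠ 0, M *ᵥ z = μ • z := by
  rw [← Matrix.spectrum_toLin', ← Module.End.hasEigenvalue_iff_mem_spectrum] at hμ
  obtain ⟨z, hz⟩ := hμ.exists_hasEigenvector
  exact ⟨z, hz.2, by simpa using hz.apply_eq_smul⟩

attribute [local instance] Matrix.linftyOpNormedRing Matrix.linftyOpNormedAlgebra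

theorem Matrix.linfty_opNorm_map_ofReal (M : Matrix n n ℝ) : ‖M.map ((↑) : ℝ → ℂ)‖ = ‖M‖ := by
  rw [← coe_nnnorm, ← coe_nnnorm, Matrix.linfty_opNNNorm_def, Matrix.linfty_opNNNorm_def]
  simp

theorem Matrix.map_ofReal_pow (M : Matrix n n ℝ) (k : ℕ) :
    M.map ((↑) : ℝ → ℂ) ^ k = (M ^ k).map ((↑) : ℝ → ℂ) :=
  (M.map_pow Complex.ofRealHom k).symm

theorem norm_le_specRad {M : Matrix n n ℝ} {μ : ℂ} (hμ : μ ∈ spectrum ℂ (M.map ((↑) : ℝ → ℂ))) :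
    ‖μ‖ ≤ specRad M := by
  refine le_csSup ?_ ⟨μ, hμ, rfl⟩
  refine ((Matrix.finite_spectrum (M.map ((↑) : ℝ → ℂ))).image (‖·‖)).bddAbove.mono ?_
  rintro _ ⟨ν, hν, rfl⟩
  exact ⟨ν, hν, rfl⟩

theorem le_specRad_of_smul_le_mulVec {M : Matrix n n ℝ} (hM : ∀ i j, 0 ≤ M i j) {w : n → ℝ}
    (hw0 : 0 ≤ w) (hw : w ≠ 0) {c : ℝ} (hc : 0 ≤ c) (h : c • w ≤ M *ᵥ w) : c ≤ specRad M := by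
  have hpow : ∀ k : ℕ, c ^ k • w ≤ (M ^ k) *ᵥ w := by
    intro k
    induction k with
    | zero => simp
    | succ k ih =>
      calc c ^ (k + 1) • w = c ^ k • (c • w) := by rw [pow_succ, mul_smul]
        _ ≤ c ^ k • (M *ᵥ w) := smul_le_smul_of_nonneg_left h (pow_nonneg hc k)
        _ = M *ᵥ (c ^ k • w) := (Matrix.mulVec_smul M _ w).symm
        _ ≤ M *ᵥ ((M ^ k) *ᵥ w) := Matrix.mulVec_mono_of_nonneg hM ih
        _ = (M ^ (k + 1)) *ᵥ w := by rw [Matrix.mulVec_mulVec, pow_succ']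
  have hnorm : ∀ k : ℕ, c ^ k ≤ ‖M ^ k‖ := by
    intro k
    have hpos : 0 ≤ c ^ k • w := smul_nonneg (pow_nonneg hc k) hw0
    refine le_of_mul_le_mul_right ?_ (norm_pos_iff.2 hw)
    calc c ^ k * ‖w‖ = ‖c ^ k • w‖ := by
          rw [norm_smul, Real.norm_of_nonneg (pow_nonneg hc k)]
      _ ≤ ‖(M ^ k) *ᵥ w‖ := (pi_norm_le_iff_of_nonneg (norm_nonneg _)).2 fun i => by
          rw [Real.norm_of_nonneg (hpos i)]
          exact (hpow k i).trans ((Real.le_norm_self _).trans (norm_le_pi_norm _ i))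
      _ ≤ ‖M ^ k‖ * ‖w‖ := Matrix.linfty_opNorm_mulVec _ _
  have : Nonempty n := (Function.ne_iff.1 hw).elim fun i _ => ⟨i⟩
  obtain ⟨μ, hμ, hμρ⟩ := spectrum.exists_nnnorm_eq_spectralRadius (M.map ((↑) : ℝ → ℂ))
  have hcμ : c.toNNReal ≤ ‖μ‖₊ := by
    rw [← ENNReal.coe_le_coe, hμρ]
    refine le_spectralRadius_of_forall_pow_le _ fun k => ?_
    rw [← NNReal.coe_le_coe, coe_nnnorm, Matrix.map_ofReal_pow, Matrix.linfty_opNorm_map_ofReal]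
    simpa [hc] using hnorm k
  exact (Real.toNNReal_le_iff_le_coe.1 hcμ).trans (norm_le_specRad hμ)

theorem isUnit_smul_one_sub_and_inv_nonneg {B : Matrix n n ℝ} (hB : ∀ i j, 0 ≤ B i j) {r : ℝ}
    (hr : 0 < r) (hspec : ∀ μ ∈ spectrum ℂ (B.map ((↑) : ℝ → ℂ)), ‖μ‖ < r) :
    IsUnit (r • (1 : Matrix n n ℝ) - B) ∧ ∀ i j, 0 ≤ (r • (1 : Matrix n n ℝ) - B)⁻¹ i j := by
  set x := r⁻¹ • B
  have hx : ∀ i j, 0 ≤ x i j := fun i j => mul_nonneg (inv_nonneg.2 hr.le) (hB i j)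
  have hρ : spectralRadius ℂ (B.map ((↑) : ℝ → ℂ)) < r.toNNReal :=
    spectralRadius_lt_of_forall_norm_lt _ (Real.toNNReal_pos.2 hr) fun μ hμ =>
      Real.lt_toNNReal_iff_coe_lt.2 (hspec μ hμ)
  have hsum : Summable (x ^ ·) := by
    refine Summable.of_norm ?_
    convert summable_norm_pow_div_of_spectralRadius_lt _ hρ using 2 with k
    rw [Matrix.map_ofReal_pow, Matrix.linfty_opNorm_map_ofReal, smul_pow, norm_smul,
      Real.coe_toNNReal _ hr.le, norm_pow, Real.norm_of_nonneg (inv_nonneg.2 hr.le), inv_pow,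
      inv_mul_eq_div]
  have hinv : (r • (1 : Matrix n n ℝ) - B) * (r⁻¹ • ∑' k, x ^ k) = 1 := by
    rw [show r • (1 : Matrix n n ℝ) - B = r • (1 - x) by
      rw [smul_sub, smul_inv_smul₀ hr.ne'], smul_mul_smul_comm, mul_inv_cancel₀ hr.ne', one_smul,
      hsum.one_sub_mul_tsum_pow]
  refine ⟨(Matrix.isUnit_iff_isUnit_det _).2 (Matrix.isUnit_det_of_right_inverse hinv),
    fun i j => ?_⟩
  rw [Matrix.inv_eq_right_inv hinv, Matrix.smul_apply, smul_eq_mul,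
    show (∑' k, x ^ k) i j = ∑' k, (x ^ k) i j from
      (congrFun (tsum_apply hsum) j).trans (tsum_apply (Pi.summable.1 hsum i))]
  exact mul_nonneg (inv_nonneg.2 hr.le) (tsum_nonneg fun k => Matrix.pow_apply_nonneg hx k i j)

end NonnegMatrix

theorem sum_subtype_eq_sum_of_support_subset {ι M : Type*} [Fintype ι] [AddCommMonoid M]
    {T : Set ι} {f : ι → M} (hf : Function.support f ⊆ T) : ∑ v : T, f v = ∑ v, f v := by
  classical
  rw [← Finset.sum_subtype T.toFinset (fun _ => Set.mem_toFinset) f]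
  exact Fintype.sum_subset fun v hv => Set.mem_toFinset.2 (hf hv)

section Reachability

variable (A : Matrix V V ℝ)

theorem reaches_refl (v : V) : Reaches A v v :=
  ⟨0, by simp⟩

theorem mem_sccOf_self (v : V) : v ∈ sccOf A v :=
  ⟨reaches_refl A v, reaches_refl A v⟩

variable {A}

theorem reaches_of_pos {u v : V} (h : 0 < A u v) : Reaches A u v :=
  ⟨1, by simpa using h⟩

theorem reaches_trans (hA : ∀ i j, 0 ≤ A i j) {u v w : V} (h₁ : Reaches A u v)
    (h₂ : Reaches A v w) : Reaches A u w := by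
  obtain ⟨k, hk⟩ := h₁
  obtain ⟨l, hl⟩ := h₂
  refine ⟨k + l, ?_⟩
  rw [pow_add, Matrix.mul_apply]
  exact (mul_pos hk hl).trans_le <| Finset.single_le_sum (f := fun x => (A ^ k) u x * (A ^ l) x w)
    (fun x _ => mul_nonneg (Matrix.pow_apply_nonneg hA k u x) (Matrix.pow_apply_nonneg hA l x w))
    (Finset.mem_univ v)


theorem exists_maximal_reaches (hA : ∀ i j, 0 ≤ A i j) {P : V → Prop} (hP : ∃ v, P v) :
    ∃ u, P u ∧ ∀ v, P v → Reaches A u v → Reaches A v u := by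
  classical
  let s := Finset.univ.filter P
  obtain ⟨u, hus, hmin⟩ := s.exists_min_image (fun a => (s.filter (Reaches A a)).card)
    (hP.elim fun v hv => ⟨v, by simpa [s] using hv⟩)
  refine ⟨u, by simpa [s] using hus, fun v hv huv => ?_⟩
  by_contra hvu
  refine (hmin v (by simpa [s] using hv)).not_gt (Finset.card_lt_card ⟨?_, fun hsub => ?_⟩)
  · intro x hx
    rw [Finset.mem_filter] at hx ⊢
    exact ⟨hx.1, reaches_trans hA huv hx.2⟩
  · exact hvu (Finset.mem_filter.1 (hsub (Finset.mem_filter.2 ⟨hus, reaches_refl A u⟩))).2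

end Reachability

section Localisation

variable {A : Matrix V V ℝ}

theorem exists_pos_le_specRadSub_sccOf (hA : ∀ i j, 0 ≤ A i j) {w : V → ℝ} (hw0 : 0 ≤ w)
    (hw : w ≠ 0) {c : ℝ} (hc : 0 ≤ c) (h : c • w ≤ A *ᵥ w) :
    ∃ u, 0 < w u ∧ c ≤ specRadSub A (sccOf A u) := by
  obtain ⟨v₀, hv₀⟩ := Function.ne_iff.1 hw
  obtain ⟨u, hu, hmax⟩ := exists_maximal_reaches hA (P := fun v => 0 < w v)
    ⟨v₀, (hw0 v₀).lt_of_ne' hv₀⟩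
  have hsupp : ∀ v ∈ sccOf A u, Function.support (fun y => A v y * w y) ⊆ sccOf A u := by
    intro v hv y hy
    have hy' : 0 < A v y ∧ 0 < w y := by
      rw [Function.mem_support, mul_ne_zero_iff] at hy
      exact ⟨(hA v y).lt_of_ne' hy.1, (hw0 y).lt_of_ne' hy.2⟩
    have huy : Reaches A u y := reaches_trans hA hv.1 (reaches_of_pos hy'.1)
    exact ⟨huy, hmax y hy'.2 huy⟩
  refine ⟨u, hu, le_specRad_of_smul_le_mulVec (fun i j : sccOf A u => hA i j)
    (w := fun i => w i) (fun i => hw0 i) (Function.ne_iff.2 ⟨⟨u, mem_sccOf_self A u⟩, hu.ne'⟩) hc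
    fun i => ?_⟩
  calc c * w i ≤ (A *ᵥ w) i := h i
    _ = ∑ y : sccOf A u, A i y * w y := (sum_subtype_eq_sum_of_support_subset (hsupp i i.2)).symm

theorem exists_mem_norm_le_specRadSub_sccOf (hA : ∀ i j, 0 ≤ A i j) {T : Set V} {μ : ℂ}
    (hμ : μ ∈ spectrum ℂ ((subMat A T).map ((↑) : ℝ → ℂ))) :
    ∃ u ∈ T, ‖μ‖ ≤ specRadSub A (sccOf A u) := by
  obtain ⟨z, hz0, hz⟩ := Matrix.exists_mulVec_eq_smul_of_mem_spectrum hμ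
  set w : V → ℝ := Function.extend Subtype.val (fun i : T => ‖z i‖) 0
  have hwT (i : T) : w i = ‖z i‖ := Subtype.val_injective.extend_apply _ _ i
  have hw_out {v : V} (hv : v ∉ T) : w v = 0 :=
    Function.extend_apply' _ _ v <| by
      rintro ⟨i, rfl⟩
      exact hv i.2
  have hw0 : 0 ≤ w := fun v => by
    by_cases hv : v ∈ T
    · exact (hwT ⟨v, hv⟩).symm ▸ norm_nonneg _
    · exact (hw_out hv).ge
  have hw : w ≠ 0 := by
    obtain ⟨i, hi⟩ := Function.ne_iff.1 hz0
    exact Function.ne_iff.2 ⟨i, by simpa [hwT] using hi⟩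
  have hsub : ‖μ‖ • w ≤ A *ᵥ w := fun v => by
    by_cases hv : v ∈ T
    · calc ‖μ‖ * w v = ‖(μ • z) ⟨v, hv⟩‖ := by simp [hwT ⟨v, hv⟩]
        _ = ‖((subMat A T).map ((↑) : ℝ → ℂ) *ᵥ z) ⟨v, hv⟩‖ := by rw [hz]
        _ ≤ (subMat A T *ᵥ fun i => ‖z i‖) ⟨v, hv⟩ :=
          Matrix.norm_map_ofReal_mulVec_le (fun i j : T => hA i j) z _
        _ = (A *ᵥ w) v := by
          refine (Finset.sum_congr rfl fun i _ => by rw [hwT]; rfl).trans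
            (sum_subtype_eq_sum_of_support_subset fun y hy => ?_)
          by_contra hyT
          exact hy (by simp [hw_out hyT])
    · rw [Pi.smul_apply, hw_out hv, smul_zero]
      exact Matrix.mulVec_nonneg_of_nonneg hA hw0 v
  obtain ⟨u, hu, hle⟩ := exists_pos_le_specRadSub_sccOf hA hw0 hw (norm_nonneg μ) hsub
  exact ⟨u, by_contra fun huT => hu.ne' (hw_out huT), hle⟩

end Localisation

def minSCCUnion (A : Matrix V V ℝ) (x : ℝ) : Set V :=
  {u | ∃ C : Set V, IsMinSCC A C ∧ specRadSub A C = x ∧ u ∈ C}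

section MinSCCUnion

variable {A : Matrix V V ℝ} {x : ℝ} {u v w : V}

theorem mem_minSCCUnion_of_reaches (hA : ∀ i j, 0 ≤ A i j) (hu : u ∈ minSCCUnion A x)
    (huw : Reaches A u w) (hwv : Reaches A w v) (hv : v ∈ minSCCUnion A x) :
    w ∈ minSCCUnion A x := by
  obtain ⟨C, hC, hCx, huC⟩ := hu
  obtain ⟨C', hC', hC'x, hvC'⟩ := hv
  obtain rfl : C = C' := by
    by_contra hne
    exact (hC'.2 C hC.1 hne ⟨u, huC, v, hvC', reaches_trans hA huw hwv⟩).ne (hCx.trans hC'x.symm)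
  obtain ⟨c, rfl⟩ := hC.1
  exact ⟨sccOf A c, hC, hCx, reaches_trans hA huC.1 huw, reaches_trans hA hwv hvC'.2⟩

theorem specRadSub_sccOf_lt (hu : u ∉ minSCCUnion A x) (huv : Reaches A u v)
    (hv : v ∈ minSCCUnion A x) : specRadSub A (sccOf A u) < x := by
  obtain ⟨C, hC, hCx, hvC⟩ := hv
  have hne : sccOf A u ≠ C := fun h => hu ⟨C, hC, hCx, h ▸ mem_sccOf_self A u⟩
  exact hCx ▸ hC.2 _ ⟨u, rfl⟩ hne ⟨u, mem_sccOf_self A u, v, hvC, huv⟩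

theorem apply_eq_zero_of_mem_minSCCUnion (hA : ∀ i j, 0 ≤ A i j) (hu : u ∈ minSCCUnion A x)
    (hwv : Reaches A w v) (hv : v ∈ minSCCUnion A x) (hw : w ∉ minSCCUnion A x) : A u w = 0 :=
  (hA u w).eq_or_lt.elim Eq.symm fun h =>
    (hw (mem_minSCCUnion_of_reaches hA hu (reaches_of_pos h) hwv hv)).elim

end MinSCCUnion

theorem apply_eq_zero_of_not_reaches {A : Matrix V V ℝ} (hA : ∀ i j, 0 ≤ A i j) {K : Set V}
    {u w : V} (hu : ¬∃ v ∈ K, Reaches A u v) (hw : ∃ v ∈ K, Reaches A w v) : A u w = 0 :=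
  (hA u w).eq_or_lt.elim Eq.symm fun h =>
    (hu (hw.imp fun _ hv => ⟨hv.1, reaches_trans hA (reaches_of_pos h) hv.2⟩)).elim

theorem sum_eq_sum_subtype_add_sum_subtype {ι M : Type*} [Fintype ι] [AddCommMonoid M]
    {K D : Set ι} (hKD : Disjoint K D) {F : ι → M} (hF : Function.support F ⊆ K ∪ D) :
    ∑ v, F v = ∑ v : K, F v + ∑ v : D, F v := by
  classical
  rw [← Finset.sum_subtype K.toFinset (fun _ => Set.mem_toFinset) F,
    ← Finset.sum_subtype D.toFinset (fun _ => Set.mem_toFinset) F,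
    ← Finset.sum_union (Set.disjoint_toFinset.2 hKD)]
  exact (Fintype.sum_subset fun v hv => by simpa using hF hv).symm

theorem mulVec_eq_smul_of_blocks {A : Matrix V V ℝ} {K D : Set V} (hKD : Disjoint K D) {r : ℝ}
    {f : K → ℝ} {g : D → ℝ} {h : V → ℝ} (hhK : ∀ u (hu : u ∈ K), h u = f ⟨u, hu⟩)
    (hhD : ∀ u (hu : u ∈ D), h u = g ⟨u, hu⟩) (hhO : ∀ u, u ∉ K → u ∉ D → h u = 0)
    (hf : subMat A K *ᵥ f = r • f)
    (hg : (r • (1 : Matrix D D ℝ) - subMat A D) *ᵥ g = A.submatrix Subtype.val Subtype.val *ᵥ f)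
    (hKD_zero : ∀ u ∈ K, ∀ w ∈ D, A u w = 0)
    (hout : ∀ u, u ∉ K → u ∉ D → ∀ w, w ∈ K ∨ w ∈ D → A u w = 0) :
    A *ᵥ h = r • h := by
  have hsplit (u : V) : (A *ᵥ h) u = ∑ w : K, A u w * f w + ∑ w : D, A u w * g w := by
    rw [Matrix.mulVec, dotProduct, sum_eq_sum_subtype_add_sum_subtype hKD fun w hw => ?_]
    · simp only [hhK _ (Subtype.prop _), hhD _ (Subtype.prop _)]
    · by_contra hw'
      simp only [Set.mem_union, not_or] at hw'
      exact hw (by simp [hhO w hw'.1 hw'.2])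
  funext u
  rw [Pi.smul_apply, smul_eq_mul, hsplit]
  by_cases huK : u ∈ K
  · have hD0 : ∑ w : D, A u w * g w = 0 :=
      Finset.sum_eq_zero fun w _ => by rw [hKD_zero u huK w w.2, zero_mul]
    rw [hD0, add_zero, hhK u huK]
    exact congrFun hf ⟨u, huK⟩
  by_cases huD : u ∈ D
  · have hgu := congrFun hg ⟨u, huD⟩
    simp only [Matrix.sub_mulVec, Matrix.smul_mulVec, Matrix.one_mulVec, Pi.sub_apply,
      Pi.smul_apply, smul_eq_mul] at hgu
    rw [hhD u huD]
    linarith [show (subMat A D *ᵥ g) ⟨u, huD⟩ = ∑ w : D, A u w * g w from rfl,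
      show (A.submatrix Subtype.val Subtype.val *ᵥ f) ⟨u, huD⟩ = ∑ w : K, A u w * f w from rfl]
  · have hzero {E : Set V} (hE : ∀ w ∈ E, w ∈ K ∨ w ∈ D) (k : E → ℝ) :
        ∑ w : E, A u w * k w = 0 :=
      Finset.sum_eq_zero fun w _ => by rw [hout u huK huD w (hE w w.2), zero_mul]
    rw [hzero (fun _ => Or.inl) f, hzero (fun _ => Or.inr) g, hhO u huK huD, mul_zero, add_zero]

theorem exists_extension_mulVec_eq_smul {A : Matrix V V ℝ} (hA : ∀ i j, 0 ≤ A i j) {K D : Set V}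
    (hKD : Disjoint K D) {r : ℝ} (hunit : IsUnit (r • (1 : Matrix D D ℝ) - subMat A D))
    (hinv : ∀ i j, 0 ≤ (r • (1 : Matrix D D ℝ) - subMat A D)⁻¹ i j)
    (hKD_zero : ∀ u ∈ K, ∀ w ∈ D, A u w = 0)
    (hout : ∀ u, u ∉ K → u ∉ D → ∀ w, w ∈ K ∨ w ∈ D → A u w = 0)
    {f : K → ℝ} (hf0 : ∀ u, 0 ≤ f u) (hf : subMat A K *ᵥ f = r • f) :
    ∃ h : V → ℝ, (∀ u (hu : u ∈ K), h u = f ⟨u, hu⟩) ∧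
      (∀ u (hu : u ∈ D), h u = (((r • (1 : Matrix D D ℝ) - subMat A D)⁻¹ *
          A.submatrix (Subtype.val : D → V) (Subtype.val : K → V)) *ᵥ f) ⟨u, hu⟩) ∧
      (∀ u, u ∉ K → u ∉ D → h u = 0) ∧ (∀ u, 0 ≤ h u) ∧ A *ᵥ h = r • h := by
  classical
  set g := ((r • (1 : Matrix D D ℝ) - subMat A D)⁻¹ *
    A.submatrix (Subtype.val : D → V) Subtype.val) *ᵥ f with hg_def
  have hg0 : 0 ≤ g := by
    rw [hg_def, ← Matrix.mulVec_mulVec]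
    exact Matrix.mulVec_nonneg_of_nonneg hinv
      (Matrix.mulVec_nonneg_of_nonneg (fun (i : D) (j : K) => hA i j) hf0)
  have hg : (r • (1 : Matrix D D ℝ) - subMat A D) *ᵥ g =
      A.submatrix Subtype.val Subtype.val *ᵥ f := by
    rw [hg_def, Matrix.mulVec_mulVec, ← Matrix.mul_assoc,
      Matrix.mul_nonsing_inv _ ((Matrix.isUnit_iff_isUnit_det _).1 hunit), Matrix.one_mul]
  let h : V → ℝ := fun u => if hu : u ∈ K then f ⟨u, hu⟩ else if hu : u ∈ D then g ⟨u, hu⟩ else 0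
  have hhK (u) (hu : u ∈ K) : h u = f ⟨u, hu⟩ := dif_pos hu
  have hhD (u) (hu : u ∈ D) : h u = g ⟨u, hu⟩ := by
    simp [h, hu, Set.disjoint_right.1 hKD hu]
  have hhO (u) (huK : u ∉ K) (huD : u ∉ D) : h u = 0 := by simp [h, huK, huD]
  refine ⟨h, hhK, hhD, hhO, fun u => ?_,
    mulVec_eq_smul_of_blocks hKD hhK hhD hhO hf hg hKD_zero hout⟩
  by_cases huK : u ∈ K
  · exact (hhK u huK).symm ▸ hf0 _
  by_cases huD : u ∈ D
  · exact (hhD u huD).symm ▸ hg0 _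
  · exact (hhO u huK huD).ge

theorem stmt16_general {V : Type*} [Fintype V] [DecidableEq V]
    (A : Matrix V V ℝ) (hA : ∀ i j, 0 ≤ A i j)
    (β : ℝ)
    (K S D : Set V)
    (hK : K = {u : V | ∃ C : Set V, IsMinSCC A C ∧ specRadSub A C = Real.exp β ∧ u ∈ C})
    (hS : S = {u : V | ∃ w ∈ K, Reaches A u w})
    (hD : D = S \ K)
    (h0 : K → ℝ) (h0pos : ∀ u, 0 ≤ h0 u)
    (h0harm : (subMat A K).mulVec h0 = Real.exp β • h0) :
    IsUnit (Real.exp β • (1 : Matrix D D ℝ) - subMat A D) ∧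
    ∃ h : V → ℝ,
      (∀ u (hu : u ∈ K), h u = h0 ⟨u, hu⟩) ∧
      (∀ u (hu : u ∈ D), h u =
        ((Real.exp β • (1 : Matrix D D ℝ) - subMat A D)⁻¹ *
          A.submatrix (Subtype.val : D → V) (Subtype.val : K → V)).mulVec h0 ⟨u, hu⟩) ∧
      (∀ u, u ∉ S → h u = 0) ∧
      (∀ u, 0 ≤ h u) ∧ A.mulVec h = Real.exp β • h := by
  obtain rfl : K = minSCCUnion A (Real.exp β) := hK
  have hS_iff {u : V} : u ∈ S ↔ ∃ v ∈ minSCCUnion A (Real.exp β), Reaches A u v := by rw [hS]; rfl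
  have hD_iff {u : V} : u ∈ D ↔ u ∈ S ∧ u ∉ minSCCUnion A (Real.exp β) := by rw [hD]; rfl
  obtain ⟨hunit, hinv⟩ := isUnit_smul_one_sub_and_inv_nonneg (B := subMat A D) (fun i j => hA i j)
    (Real.exp_pos β) fun μ hμ => by
      obtain ⟨u, hu, hle⟩ := exists_mem_norm_le_specRadSub_sccOf hA hμ
      obtain ⟨huS, huK⟩ := hD_iff.1 hu
      obtain ⟨v, hv, huv⟩ := hS_iff.1 huS
      exact hle.trans_lt (specRadSub_sccOf_lt huK huv hv)
  obtain ⟨h, hhK, hhD, hhO, hh0, hharm⟩ := exists_extension_mulVec_eq_smul hA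
    (hD ▸ Set.disjoint_sdiff_right) hunit hinv
    (fun u hu w hw => by
      obtain ⟨hwS, hwK⟩ := hD_iff.1 hw
      obtain ⟨v, hv, hwv⟩ := hS_iff.1 hwS
      exact apply_eq_zero_of_mem_minSCCUnion hA hu hwv hv hwK)
    (fun u huK huD w hw => apply_eq_zero_of_not_reaches hA
      (fun hu => huD (hD_iff.2 ⟨hS_iff.2 hu, huK⟩))
      (hw.elim (fun hwK => ⟨w, hwK, reaches_refl A w⟩) fun hwD => hS_iff.1 (hD_iff.1 hwD).1))
    h0pos h0harm
  refine ⟨hunit, h, hhK, hhD, fun u hu => hhO u ?_ fun huD => hu (hD_iff.1 huD).1, hh0, hharm⟩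
  exact fun huK => hu (hS_iff.2 ⟨u, huK, reaches_refl A u⟩)

/-- `K` is the union of all minimal strongly connected components with
`ρ(A_C) = e^β`, `S := {u : u ⟶* w for some w ∈ K}`, `D := S \ K`. Any nonnegative `h⁰` with
`A_K h⁰ = e^β h⁰` extends to a nonnegative `h` with `A h = e^β h` via
`h|_K = h⁰`, `h|_D = (e^β I − A_D)⁻¹ A_{D,K} h⁰`, `h = 0` off `S`; moreover `e^β I − A_D` is
invertible. -/
theorem stmt16 {V : Type*} [Fintype V] [DecidableEq V] [Nonempty V]
    (A : Matrix V V ℝ) (hA : ∀ i j, 0 ≤ A i j)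
    (β : ℝ) (hβ : 0 < β)
    (K S D : Set V)
    (hK : K = {u : V | ∃ C : Set V, IsMinSCC A C ∧ specRadSub A C = Real.exp β ∧ u ∈ C})
    (hS : S = {u : V | ∃ w ∈ K, Reaches A u w})
    (hD : D = S \ K)
    (h0 : K → ℝ) (h0pos : ∀ u, 0 ≤ h0 u)
    (h0harm : (subMat A K).mulVec h0 = Real.exp β • h0) :
    IsUnit (Real.exp β • (1 : Matrix D D ℝ) - subMat A D) ∧
    ∃ h : V → ℝ,
      (∀ u (hu : u ∈ K), h u = h0 ⟨u, hu⟩) ∧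
      (∀ u (hu : u ∈ D), h u =
        ((Real.exp β • (1 : Matrix D D ℝ) - subMat A D)⁻¹ *
          A.submatrix (Subtype.val : D → V) (Subtype.val : K → V)).mulVec h0 ⟨u, hu⟩) ∧
      (∀ u, u ∉ S → h u = 0) ∧
      (∀ u, 0 ≤ h u) ∧ A.mulVec h = Real.exp β • h :=
  stmt16_general A hA β K S D hK hS hD h0 h0pos h0harm
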